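/- arXiv:0901.1175 — 2 statements merged into one kernel-verified Lean document; each statement's English description precedes it below -/
import Mathlib

section
/- Let α be in NC(n). Then the map β ↦ {V block of α : V is β-special} is injective from the set {β ∈ NC(n) : β ≫ α} into the set of subsets of the set of blocks of α, and its image equals the collection of those sets of blocks of α which contain all outer blocks of α. -/
/-!
Write `Nests V U` when the hull `[min V, max V]` contains `[min U, max U]`. If `β ≫ α`, every
block `W` of `β` contains a block of `α` with the same hull, its special block, and since `β` is
non-crossing, every special block nesting a block `U ⊆ W` of `α` also nests that of `W`. So `W` is
the union of the blocks of `α` whose innermost nesting special block is that of `W`, and `β` is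
recovered from its special blocks. Conversely, for a set `S` of blocks containing the outer
blocks, every block of `α` is nested in some member of `S` (an outer block), these members form a
chain because `α` is non-crossing, and grouping the blocks of `α` by their innermost member of `S`
gives a non-crossing `β ≫ α` whose special blocks are exactly `S`.
-/

open scoped Classical

/-- The minimum of a finset of naturals (`0` if empty). -/
noncomputable def fmin (A : Finset ℕ) : ℕ := sInf (A : Set ℕ)

/-- The maximum of a finset of naturals (`0` if empty). -/
noncomputable def fmax (A : Finset ℕ) : ℕ := sSup (A : Set ℕ)

/-- `α` is a partition of the finite set `F ⊆ ℕ`. -/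
def IsPartitionOfSet (F : Finset ℕ) (α : Finset (Finset ℕ)) : Prop :=
  (∀ V ∈ α, V.Nonempty) ∧ (∀ V ∈ α, V ⊆ F) ∧ (∀ m ∈ F, ∃ V ∈ α, m ∈ V) ∧
    ∀ V ∈ α, ∀ W ∈ α, V ≠ W → V ∩ W = ∅

/-- `α` is a partition of `{1,…,n}`. -/
def IsPartitionOf (n : ℕ) (α : Finset (Finset ℕ)) : Prop :=
  IsPartitionOfSet (Finset.Icc 1 n) α

/-- Two distinct blocks of the family `π` cross: there are `a < b < c < d` with
`a, c` in one block and `b, d` in a different block. -/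
def IsCrossing (π : Finset (Finset ℕ)) : Prop :=
  ∃ A ∈ π, ∃ B ∈ π, A ≠ B ∧
    ∃ a ∈ A, ∃ b ∈ B, ∃ c ∈ A, ∃ d ∈ B, a < b ∧ b < c ∧ c < d

/-- `α ∈ NC(n)`: a non-crossing partition of `{1,…,n}`. -/
def IsNCPartition (n : ℕ) (α : Finset (Finset ℕ)) : Prop :=
  IsPartitionOf n α ∧ ¬ IsCrossing α

/-- Reverse refinement order `α ≤ β`: every block of `α` is contained in a block of `β`
(equivalently, every block of `β` is a union of blocks of `α`). -/
def Refines (α β : Finset (Finset ℕ)) : Prop := ∀ V ∈ α, ∃ W ∈ β, V ⊆ W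

/-- The partial order `α ≪ β`: `α ≤ β` and for every block `W` of `β` there is a block
`V` of `α` containing both `min W` and `max W`. -/
def LL (α β : Finset (Finset ℕ)) : Prop :=
  Refines α β ∧ ∀ W ∈ β, ∃ V ∈ α, fmin W ∈ V ∧ fmax W ∈ V

/-- A block `V` (of `α`) is `β`-special: some block `W` of `β` has the same min and max. -/
def SpecialBlock (β : Finset (Finset ℕ)) (V : Finset ℕ) : Prop :=
  ∃ W ∈ β, fmin V = fmin W ∧ fmax V = fmax W

/-- `V` is an outer block of `α`: no block of `α` strictly nests around it. -/
def OuterBlock (α : Finset (Finset ℕ)) (V : Finset ℕ) : Prop :=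
  ∀ V' ∈ α, ¬ (fmin V' < fmin V ∧ fmax V < fmax V')

/-- `π` is a linked partition of the finite set `F ⊆ ℕ`. -/
def IsLinkedPartitionOfSet (F : Finset ℕ) (π : Finset (Finset ℕ)) : Prop :=
  (∀ A ∈ π, A.Nonempty) ∧ (∀ A ∈ π, A ⊆ F) ∧ (∀ m ∈ F, ∃ A ∈ π, m ∈ A) ∧
    ∀ A ∈ π, ∀ B ∈ π, A ≠ B →
      A ∩ B = ∅ ∨
        (2 ≤ A.card ∧ 2 ≤ B.card ∧ (A ∩ B).card = 1 ∧ fmin A ≠ fmin B ∧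
          ∀ x ∈ A ∩ B, x = fmin A ∨ x = fmin B)

/-- `π ∈ NCL(F)`: a non-crossing linked partition of the finite set `F`. -/
def IsNCLOfSet (F : Finset ℕ) (π : Finset (Finset ℕ)) : Prop :=
  IsLinkedPartitionOfSet F π ∧ ¬ IsCrossing π

/-- `π ∈ NCL(n)`: a non-crossing linked partition of `{1,…,n}`. -/
def IsNCL (n : ℕ) (π : Finset (Finset ℕ)) : Prop :=
  IsNCLOfSet (Finset.Icc 1 n) π

/-- The number of blocks of `π` containing `m`. -/
noncomputable def coverCount (π : Finset (Finset ℕ)) (m : ℕ) : ℕ :=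
  (π.filter fun A => m ∈ A).card

/-- `m` is singly-covered by `π`: it lies in exactly one block. -/
def SinglyCovered (π : Finset (Finset ℕ)) (m : ℕ) : Prop := coverCount π m = 1

/-- `m` is doubly-covered by `π`: it lies in exactly two blocks. -/
def DoublyCovered (π : Finset (Finset ℕ)) (m : ℕ) : Prop := coverCount π m = 2

/-- The partition `π̂` generated by the blocks of `π`: its blocks are the connected
components of the ground set under the relation of lying in a common block of `π`. -/
noncomputable def genPart (π : Finset (Finset ℕ)) : Finset (Finset ℕ) :=
  (π.sup id).image fun m =>
    (π.sup id).filter fun x =>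
      Relation.EqvGen (fun a b => ∃ A ∈ π, a ∈ A ∧ b ∈ A) m x

/-- The unlinking `π̌` of a linked partition `π`. -/
noncomputable def unlink (π : Finset (Finset ℕ)) : Finset (Finset ℕ) :=
  π.image fun A => if SinglyCovered π (fmin A) then A else A.erase (fmin A)

/-- The block of `α` containing `m` (empty if there is none). -/
noncomputable def blockOf (α : Finset (Finset ℕ)) (m : ℕ) : Finset ℕ :=
  (α.filter fun V => m ∈ V).sup id

/-- The successor of `m` in the cycle on the block `V` (elements in increasing order). -/
noncomputable def nextInBlock (V : Finset ℕ) (m : ℕ) : ℕ :=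
  if m = fmax V then fmin V else fmin (V.filter fun x => m < x)

/-- The predecessor of `m` in the cycle on the block `V`. -/
noncomputable def prevInBlock (V : Finset ℕ) (m : ℕ) : ℕ :=
  if m = fmin V then fmax V else fmax (V.filter fun x => x < m)

/-- The permutation `P_α` associated to a partition `α`, as a function: each block
`{i₁ < i₂ < ⋯ < iₘ}` becomes the cycle `i₁ ↦ i₂ ↦ ⋯ ↦ iₘ ↦ i₁`. -/
noncomputable def permOf (α : Finset (Finset ℕ)) (m : ℕ) : ℕ :=
  if m ∈ blockOf α m then nextInBlock (blockOf α m) m else m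

/-- The inverse permutation `P_α⁻¹`, as a function. -/
noncomputable def permOfInv (α : Finset (Finset ℕ)) (m : ℕ) : ℕ :=
  if m ∈ blockOf α m then prevInBlock (blockOf α m) m else m

/-- The action `τ·α` of a map `τ` on a partition `α = {V₁,…,V_p}`, giving
`{τ(V₁),…,τ(V_p)}`. -/
def mapPart (τ : ℕ → ℕ) (α : Finset (Finset ℕ)) : Finset (Finset ℕ) :=
  α.image fun V => V.image τ

/-- The cycled unlinking `π° := P_{π̂}⁻¹ · π̌`. -/
noncomputable def cycUnlink (π : Finset (Finset ℕ)) : Finset (Finset ℕ) :=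
  mapPart (permOfInv (genPart π)) (unlink π)

/-- `NC(n)` as a finset. -/
noncomputable def NCF (n : ℕ) : Finset (Finset (Finset ℕ)) :=
  ((Finset.Icc 1 n).powerset.powerset).filter (IsNCPartition n)

/-- `NCL(n)` as a finset. -/
noncomputable def NCLF (n : ℕ) : Finset (Finset (Finset ℕ)) :=
  ((Finset.Icc 1 n).powerset.powerset).filter (IsNCL n)

/-- The restriction `π|_E`: the blocks of `π` contained in `E`. -/
def restrictL (π : Finset (Finset ℕ)) (E : Finset ℕ) : Finset (Finset ℕ) :=
  π.filter fun A => A ⊆ E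

/-- The partition `β₀` obtained from `β` by leaving blocks of size `≤ 2` intact and
breaking each block `W` with `|W| ≥ 3` into the doubleton `{min W, max W}` together
with `|W| - 2` singletons. -/
noncomputable def breakBlocks (β : Finset (Finset ℕ)) : Finset (Finset ℕ) :=
  β.biUnion fun W =>
    if W.card ≤ 2 then {W}
    else insert {fmin W, fmax W} ((W \ {fmin W, fmax W}).image fun x => ({x} : Finset ℕ))

open Finset

lemma fmin_mem {A : Finset ℕ} (h : A.Nonempty) : fmin A ∈ A := by
  simpa [fmin] using Nat.sInf_mem (s := (A : Set ℕ)) (by simpa using h)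

lemma fmax_mem {A : Finset ℕ} (h : A.Nonempty) : fmax A ∈ A := by
  simpa [fmax] using Nat.sSup_mem (s := (A : Set ℕ)) (by simpa using h) A.finite_toSet.bddAbove

lemma fmin_le {A : Finset ℕ} {a : ℕ} (ha : a ∈ A) : fmin A ≤ a :=
  Nat.sInf_le (by simpa using ha)

lemma le_fmax {A : Finset ℕ} {a : ℕ} (ha : a ∈ A) : a ≤ fmax A :=
  le_csSup A.finite_toSet.bddAbove (by simpa using ha)

def Nests (V U : Finset ℕ) : Prop := fmin V ≤ fmin U ∧ fmax U ≤ fmax V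

lemma Nests.refl (V : Finset ℕ) : Nests V V := ⟨le_rfl, le_rfl⟩

lemma Nests.trans {U V W : Finset ℕ} (h₁ : Nests W V) (h₂ : Nests V U) : Nests W U :=
  ⟨h₁.1.trans h₂.1, h₂.2.trans h₁.2⟩

lemma nests_congr_left {U V V' : Finset ℕ} (hmin : fmin V = fmin V') (hmax : fmax V = fmax V') :
    Nests V U ↔ Nests V' U := by
  rw [Nests, Nests, hmin, hmax]

lemma nests_congr_right {U U' V : Finset ℕ} (hmin : fmin U = fmin U') (hmax : fmax U = fmax U') :
    Nests V U ↔ Nests V U' := by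
  rw [Nests, Nests, hmin, hmax]

lemma nests_of_subset {U W : Finset ℕ} (hU : U.Nonempty) (h : U ⊆ W) : Nests W U :=
  ⟨fmin_le (h (fmin_mem hU)), le_fmax (h (fmax_mem hU))⟩

section Partition

variable {F : Finset ℕ} {π : Finset (Finset ℕ)} {A B : Finset ℕ}

lemma IsPartitionOfSet.eq_of_mem_of_mem (h : IsPartitionOfSet F π) (hA : A ∈ π) (hB : B ∈ π)
    {x : ℕ} (hxA : x ∈ A) (hxB : x ∈ B) : A = B := by
  by_contra hne
  simpa [h.2.2.2 A hA B hB hne] using mem_inter.2 ⟨hxA, hxB⟩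

lemma IsPartitionOfSet.eq_of_fmin_eq (h : IsPartitionOfSet F π) (hA : A ∈ π) (hB : B ∈ π)
    (he : fmin A = fmin B) : A = B :=
  h.eq_of_mem_of_mem hA hB (fmin_mem (h.1 A hA)) (he ▸ fmin_mem (h.1 B hB))

lemma IsPartitionOfSet.eq_of_fmax_eq (h : IsPartitionOfSet F π) (hA : A ∈ π) (hB : B ∈ π)
    (he : fmax A = fmax B) : A = B :=
  h.eq_of_mem_of_mem hA hB (fmax_mem (h.1 A hA)) (he ▸ fmax_mem (h.1 B hB))

lemma IsPartitionOfSet.eq_of_nests_of_nests (h : IsPartitionOfSet F π) (hA : A ∈ π)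
    (hB : B ∈ π) (hAB : Nests A B) (hBA : Nests B A) : A = B :=
  h.eq_of_fmin_eq hA hB (le_antisymm hAB.1 hBA.1)

lemma IsNCPartition.nests_of_mem_of_mem_hull {n : ℕ} (h : IsNCPartition n π) (hA : A ∈ π)
    (hB : B ∈ π) {x : ℕ} (hxA : x ∈ A) (h₁ : fmin B ≤ x) (h₂ : x ≤ fmax B) : Nests B A := by
  rcases eq_or_ne A B with rfl | hne
  · exact Nests.refl A
  have hBne : B.Nonempty := h.1.1 B hB
  have hx₁ : fmin B < x := h₁.lt_of_ne fun he =>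
    hne (h.1.eq_of_mem_of_mem hA hB hxA (he ▸ fmin_mem hBne))
  have hx₂ : x < fmax B := h₂.lt_of_ne fun he =>
    hne (h.1.eq_of_mem_of_mem hA hB hxA (he ▸ fmax_mem hBne))
  constructor
  · by_contra! hlt
    exact h.2 ⟨A, hA, B, hB, hne, _, fmin_mem (h.1.1 A hA), _, fmin_mem hBne, x, hxA, _,
      fmax_mem hBne, hlt, hx₁, hx₂⟩
  · by_contra! hlt
    exact h.2 ⟨B, hB, A, hA, hne.symm, _, fmin_mem hBne, x, hxA, _, fmax_mem hBne, _,
      fmax_mem (h.1.1 A hA), hx₁, hx₂, hlt⟩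

lemma IsNCPartition.nests_or_nests {n : ℕ} (h : IsNCPartition n π) (hA : A ∈ π) (hB : B ∈ π)
    {U : Finset ℕ} (hU : U.Nonempty) (hAU : Nests A U) (hBU : Nests B U) :
    Nests A B ∨ Nests B A := by
  have hU' : fmin U ≤ fmax U := fmin_le (fmax_mem hU)
  rcases le_total (fmin A) (fmin B) with hle | hle
  · exact .inl (h.nests_of_mem_of_mem_hull hB hA (fmin_mem (h.1.1 B hB)) hle (by
      linarith [hBU.1, hAU.2]))
  · exact .inr (h.nests_of_mem_of_mem_hull hA hB (fmin_mem (h.1.1 A hA)) hle (by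
      linarith [hAU.1, hBU.2]))

lemma OuterBlock.eq_of_nests {α : Finset (Finset ℕ)} (hα : IsPartitionOfSet F α) {V V' : Finset ℕ}
    (hout : OuterBlock α V) (hV : V ∈ α) (hV' : V' ∈ α) (h : Nests V' V) : V = V' := by
  by_cases hmin : fmin V' = fmin V
  · exact hα.eq_of_fmin_eq hV hV' hmin.symm
  · exact hα.eq_of_fmax_eq hV hV' <|
      h.2.eq_of_not_lt fun hlt => hout V' hV' ⟨h.1.lt_of_ne hmin, hlt⟩

lemma exists_outerBlock_nests {α : Finset (Finset ℕ)} {U : Finset ℕ} (hU : U ∈ α) :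
    ∃ V ∈ α, OuterBlock α V ∧ Nests V U := by
  obtain ⟨V, hV, hmin⟩ := exists_min_image (α.filter (Nests · U)) fmin
    ⟨U, mem_filter.2 ⟨hU, Nests.refl U⟩⟩
  rw [mem_filter] at hV
  refine ⟨V, hV.1, fun V' hV' hlt => ?_, hV.2⟩
  have hV'U : Nests V' U := Nests.trans ⟨hlt.1.le, hlt.2.le⟩ hV.2
  exact (hmin V' (mem_filter.2 ⟨hV', hV'U⟩)).not_gt hlt.1

end Partition

def IsInnermostNest (S : Finset (Finset ℕ)) (V U : Finset ℕ) : Prop :=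
  V ∈ S ∧ Nests V U ∧ ∀ V' ∈ S, Nests V' U → Nests V' V

/-- The block of the partition `β ≫ α` with `β`-special blocks `S` whose special block is `V`. -/
noncomputable def blockOfSpecial (α S : Finset (Finset ℕ)) (V : Finset ℕ) : Finset ℕ :=
  (α.filter (IsInnermostNest S V)).sup id

noncomputable def partitionOfSpecial (α S : Finset (Finset ℕ)) : Finset (Finset ℕ) :=
  S.image (blockOfSpecial α S)

section Reconstruction

variable {n : ℕ} {F : Finset ℕ} {α S : Finset (Finset ℕ)} {U V V' : Finset ℕ}

lemma isInnermostNest_self (hV : V ∈ S) : IsInnermostNest S V V :=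
  ⟨hV, Nests.refl V, fun _ _ h => h⟩

lemma IsInnermostNest.unique (hα : IsPartitionOfSet F α) (hS : S ⊆ α)
    (h : IsInnermostNest S V U) (h' : IsInnermostNest S V' U) : V = V' :=
  hα.eq_of_nests_of_nests (hS h.1) (hS h'.1) (h'.2.2 V h.1 h.2.1) (h.2.2 V' h'.1 h'.2.1)

/-- The members of `S` nesting `U` form a chain (any two of them share the hull of `U`), so the
one with the largest minimum is innermost; there is one because an outer block nests `U`. -/
lemma exists_isInnermostNest (hα : IsNCPartition n α) (hS : S ⊆ α)
    (houter : ∀ V ∈ α, OuterBlock α V → V ∈ S) (hU : U ∈ α) : ∃ V, IsInnermostNest S V U := by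
  obtain ⟨V₀, hV₀, hout, hV₀U⟩ := exists_outerBlock_nests hU
  obtain ⟨V, hV, hmax⟩ := exists_max_image (S.filter (Nests · U)) fmin
    ⟨V₀, mem_filter.2 ⟨houter V₀ hV₀ hout, hV₀U⟩⟩
  rw [mem_filter] at hV
  refine ⟨V, hV.1, hV.2, fun V' hV' hV'U => ?_⟩
  rcases hα.nests_or_nests (hS hV.1) (hS hV') (hα.1.1 U hU) hV.2 hV'U with h | h
  · have hmin : fmin V' ≤ fmin V := hmax V' (mem_filter.2 ⟨hV', hV'U⟩)
    rw [hα.1.eq_of_fmin_eq (hS hV.1) (hS hV') (le_antisymm h.1 hmin)]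
    exact Nests.refl V'
  · exact h

lemma mem_blockOfSpecial {x : ℕ} :
    x ∈ blockOfSpecial α S V ↔ ∃ U ∈ α, IsInnermostNest S V U ∧ x ∈ U := by
  simp [blockOfSpecial, mem_sup, and_assoc]

lemma subset_blockOfSpecial (hS : S ⊆ α) (hV : V ∈ S) : V ⊆ blockOfSpecial α S V :=
  fun _ hx => mem_blockOfSpecial.2 ⟨V, hS hV, isInnermostNest_self hV, hx⟩

lemma mem_hull_of_mem_blockOfSpecial {x : ℕ} (hx : x ∈ blockOfSpecial α S V) :
    fmin V ≤ x ∧ x ≤ fmax V := by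
  obtain ⟨U, -, hU, hxU⟩ := mem_blockOfSpecial.1 hx
  exact ⟨hU.2.1.1.trans (fmin_le hxU), (le_fmax hxU).trans hU.2.1.2⟩

lemma fmin_blockOfSpecial (hS : S ⊆ α) (hV : V ∈ S) (hVne : V.Nonempty) :
    fmin (blockOfSpecial α S V) = fmin V :=
  le_antisymm (fmin_le (subset_blockOfSpecial hS hV (fmin_mem hVne)))
    (mem_hull_of_mem_blockOfSpecial (fmin_mem (hVne.mono (subset_blockOfSpecial hS hV)))).1

lemma fmax_blockOfSpecial (hS : S ⊆ α) (hV : V ∈ S) (hVne : V.Nonempty) :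
    fmax (blockOfSpecial α S V) = fmax V :=
  le_antisymm
    (mem_hull_of_mem_blockOfSpecial (fmax_mem (hVne.mono (subset_blockOfSpecial hS hV)))).2
    (le_fmax (subset_blockOfSpecial hS hV (fmax_mem hVne)))

lemma eq_of_mem_blockOfSpecial (hα : IsPartitionOfSet F α) (hS : S ⊆ α) {x : ℕ}
    (hx : x ∈ blockOfSpecial α S V) (hx' : x ∈ blockOfSpecial α S V') : V = V' := by
  obtain ⟨U, hU, hVU, hxU⟩ := mem_blockOfSpecial.1 hx
  obtain ⟨U', hU', hV'U', hxU'⟩ := mem_blockOfSpecial.1 hx'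
  obtain rfl := hα.eq_of_mem_of_mem hU hU' hxU hxU'
  exact hVU.unique hα hS hV'U'

lemma nests_of_mem_blockOfSpecial (hα : IsNCPartition n α) (hS : S ⊆ α) (hV' : V' ∈ S)
    {x : ℕ} (hx : x ∈ blockOfSpecial α S V) (h₁ : fmin V' ≤ x) (h₂ : x ≤ fmax V') :
    Nests V' V := by
  obtain ⟨U, hU, hVU, hxU⟩ := mem_blockOfSpecial.1 hx
  exact hVU.2.2 V' hV' (hα.nests_of_mem_of_mem_hull hU (hS hV') hxU h₁ h₂)

lemma partitionOfSpecial_isNCPartition (hα : IsNCPartition n α) (hS : S ⊆ α)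
    (houter : ∀ V ∈ α, OuterBlock α V → V ∈ S) : IsNCPartition n (partitionOfSpecial α S) := by
  refine ⟨⟨?_, ?_, ?_, ?_⟩, ?_⟩
  · simp only [partitionOfSpecial, mem_image]
    rintro _ ⟨V, hV, rfl⟩
    exact (hα.1.1 V (hS hV)).mono (subset_blockOfSpecial hS hV)
  · simp only [partitionOfSpecial, mem_image]
    rintro _ ⟨V, -, rfl⟩ x hx
    obtain ⟨U, hU, -, hxU⟩ := mem_blockOfSpecial.1 hx
    exact hα.1.2.1 U hU hxU
  · intro x hx
    obtain ⟨U, hU, hxU⟩ := hα.1.2.2.1 x hx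
    obtain ⟨V, hVU⟩ := exists_isInnermostNest hα hS houter hU
    exact ⟨_, mem_image_of_mem _ hVU.1, mem_blockOfSpecial.2 ⟨U, hU, hVU, hxU⟩⟩
  · simp only [partitionOfSpecial, mem_image]
    rintro _ ⟨V, -, rfl⟩ _ ⟨V', -, rfl⟩ hne
    refine eq_empty_of_forall_notMem fun x hx => hne ?_
    rw [mem_inter] at hx
    rw [eq_of_mem_blockOfSpecial hα.1 hS hx.1 hx.2]
  · simp only [IsCrossing, partitionOfSpecial, mem_image]
    rintro ⟨_, ⟨V, hV, rfl⟩, _, ⟨V', hV', rfl⟩, hne, a, ha, b, hb, c, hc, d, hd, hab, hbc, hcd⟩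
    have hV'V : Nests V' V := nests_of_mem_blockOfSpecial hα hS hV' hc
      ((mem_hull_of_mem_blockOfSpecial hb).1.trans hbc.le)
      (hcd.le.trans (mem_hull_of_mem_blockOfSpecial hd).2)
    have hVV' : Nests V V' := nests_of_mem_blockOfSpecial hα hS hV hb
      ((mem_hull_of_mem_blockOfSpecial ha).1.trans hab.le)
      (hbc.le.trans (mem_hull_of_mem_blockOfSpecial hc).2)
    exact hne (by rw [hα.1.eq_of_nests_of_nests (hS hV) (hS hV') hVV' hV'V])

lemma partitionOfSpecial_LL (hα : IsNCPartition n α) (hS : S ⊆ α)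
    (houter : ∀ V ∈ α, OuterBlock α V → V ∈ S) : LL α (partitionOfSpecial α S) := by
  refine ⟨fun U hU => ?_, ?_⟩
  · obtain ⟨V, hVU⟩ := exists_isInnermostNest hα hS houter hU
    exact ⟨_, mem_image_of_mem _ hVU.1, fun x hx => mem_blockOfSpecial.2 ⟨U, hU, hVU, hx⟩⟩
  · simp only [partitionOfSpecial, mem_image]
    rintro _ ⟨V, hV, rfl⟩
    have hVne := hα.1.1 V (hS hV)
    exact ⟨V, hS hV, by rw [fmin_blockOfSpecial hS hV hVne]; exact fmin_mem hVne,
      by rw [fmax_blockOfSpecial hS hV hVne]; exact fmax_mem hVne⟩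

lemma filter_specialBlock_partitionOfSpecial (hα : IsNCPartition n α) (hS : S ⊆ α) :
    α.filter (fun V => SpecialBlock (partitionOfSpecial α S) V) = S := by
  ext U
  simp only [mem_filter, SpecialBlock, partitionOfSpecial, exists_mem_image]
  constructor
  · rintro ⟨hU, V, hV, hmin, -⟩
    rw [fmin_blockOfSpecial hS hV (hα.1.1 V (hS hV))] at hmin
    rwa [hα.1.eq_of_fmin_eq hU (hS hV) hmin]
  · intro hU
    have hUne := hα.1.1 U (hS hU)
    exact ⟨hS hU, U, hU, (fmin_blockOfSpecial hS hU hUne).symm,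
      (fmax_blockOfSpecial hS hU hUne).symm⟩

end Reconstruction

section Injectivity

variable {n : ℕ} {α β : Finset (Finset ℕ)} {V W : Finset ℕ}

lemma LL.exists_hull_eq {F : Finset ℕ} (hβ : IsPartitionOfSet F β) (hl : LL α β) (hW : W ∈ β) :
    ∃ V ∈ α, fmin V = fmin W ∧ fmax V = fmax W := by
  obtain ⟨V, hV, hmin, hmax⟩ := hl.2 W hW
  obtain ⟨W', hW', hVW'⟩ := hl.1 V hV
  obtain rfl := hβ.eq_of_mem_of_mem hW hW' (fmin_mem (hβ.1 W hW)) (hVW' hmin)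
  have hWV : Nests W V := nests_of_subset ⟨_, hmin⟩ hVW'
  exact ⟨V, hV, le_antisymm (fmin_le hmin) hWV.1, le_antisymm hWV.2 (le_fmax hmax)⟩

lemma LL.specialBlock_of_outerBlock (hα : IsNCPartition n α) (hβ : IsPartitionOf n β)
    (hl : LL α β) (hV : V ∈ α) (hout : OuterBlock α V) : SpecialBlock β V := by
  obtain ⟨W, hW, hVW⟩ := hl.1 V hV
  obtain ⟨V', hV', hmin, hmax⟩ := hl.exists_hull_eq hβ hW
  have hV'V : Nests V' V := (nests_congr_left hmin hmax).2 (nests_of_subset (hα.1.1 V hV) hVW)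
  obtain rfl := hout.eq_of_nests hα.1 hV hV' hV'V
  exact ⟨W, hW, hmin, hmax⟩

/-- Every special block nesting `U ⊆ W` comes from a block of `β` whose hull meets `W`, and
that hull then contains the hull of `W`. -/
lemma isInnermostNest_of_subset (hβ : IsNCPartition n β) (hW : W ∈ β) (hV : V ∈ α)
    (hmin : fmin V = fmin W) (hmax : fmax V = fmax W) {U : Finset ℕ} (hU : U.Nonempty)
    (hUW : U ⊆ W) : IsInnermostNest (α.filter fun V => SpecialBlock β V) V U := by
  have hWU : Nests W U := nests_of_subset hU hUW
  refine ⟨mem_filter.2 ⟨hV, W, hW, hmin, hmax⟩, (nests_congr_left hmin hmax).2 hWU, ?_⟩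
  rintro V' hV' hV'U
  obtain ⟨W', hW', hmin', hmax'⟩ := (mem_filter.1 hV').2
  rw [nests_congr_left hmin' hmax'] at hV'U
  rw [nests_congr_left hmin' hmax', nests_congr_right hmin hmax]
  exact hβ.nests_of_mem_of_mem_hull hW hW' (hUW (fmin_mem hU)) hV'U.1
    ((fmin_le (fmax_mem hU)).trans hV'U.2)

lemma LL.eq_blockOfSpecial (hα : IsNCPartition n α) (hβ : IsNCPartition n β) (hl : LL α β)
    (hW : W ∈ β) (hV : V ∈ α) (hmin : fmin V = fmin W) (hmax : fmax V = fmax W) :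
    W = blockOfSpecial α (α.filter fun V => SpecialBlock β V) V := by
  ext y
  rw [mem_blockOfSpecial]
  constructor
  · intro hy
    obtain ⟨U, hU, hyU⟩ := hα.1.2.2.1 y (hβ.1.2.1 W hW hy)
    obtain ⟨W', hW', hUW'⟩ := hl.1 U hU
    obtain rfl := hβ.1.eq_of_mem_of_mem hW hW' hy (hUW' hyU)
    exact ⟨U, hU, isInnermostNest_of_subset hβ hW hV hmin hmax ⟨y, hyU⟩ hUW', hyU⟩
  · rintro ⟨U, hU, hVU, hyU⟩
    obtain ⟨W', hW', hUW'⟩ := hl.1 U hU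
    obtain ⟨V', hV', hmin', hmax'⟩ := hl.exists_hull_eq hβ.1 hW'
    obtain rfl := hVU.unique hα.1 (filter_subset _ _)
      (isInnermostNest_of_subset hβ hW' hV' hmin' hmax' ⟨y, hyU⟩ hUW')
    rw [hβ.1.eq_of_fmin_eq hW hW' (hmin.symm.trans hmin')]
    exact hUW' hyU

lemma LL.eq_partitionOfSpecial (hα : IsNCPartition n α) (hβ : IsNCPartition n β)
    (hl : LL α β) : β = partitionOfSpecial α (α.filter fun V => SpecialBlock β V) := by
  ext W
  simp only [partitionOfSpecial, mem_image]
  constructor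
  · intro hW
    obtain ⟨V, hV, hmin, hmax⟩ := hl.exists_hull_eq hβ.1 hW
    exact ⟨V, mem_filter.2 ⟨hV, W, hW, hmin, hmax⟩,
      (hl.eq_blockOfSpecial hα hβ hW hV hmin hmax).symm⟩
  · rintro ⟨V, hVS, rfl⟩
    obtain ⟨hV, W, hW, hmin, hmax⟩ := mem_filter.1 hVS
    rwa [← hl.eq_blockOfSpecial hα hβ hW hV hmin hmax]

end Injectivity

/-- Let `α ∈ NC(n)`. The map `β ↦ {V block of α : V is β-special}` is
injective on `{β ∈ NC(n) : β ≫ α}`, and its image is the collection of sets of blocks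
of `α` containing all outer blocks of `α`. -/
theorem stmt6 (n : ℕ) (α : Finset (Finset ℕ)) (hα : IsNCPartition n α) :
    Set.InjOn (fun β => α.filter fun V => SpecialBlock β V)
      {β : Finset (Finset ℕ) | IsNCPartition n β ∧ LL α β} ∧
    (fun β => α.filter fun V => SpecialBlock β V) ''
        {β : Finset (Finset ℕ) | IsNCPartition n β ∧ LL α β}
      = {𝒱 : Finset (Finset ℕ) | 𝒱 ⊆ α ∧ ∀ V ∈ α, OuterBlock α V → V ∈ 𝒱} := by
  refine ⟨fun β₁ h₁ β₂ h₂ heq => ?_, Set.ext fun 𝒱 => ⟨?_, ?_⟩⟩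
  · rw [h₁.2.eq_partitionOfSpecial hα h₁.1, h₂.2.eq_partitionOfSpecial hα h₂.1]
    exact congrArg (partitionOfSpecial α) heq
  · rintro ⟨β, ⟨hβ, hl⟩, rfl⟩
    exact ⟨filter_subset _ _, fun V hV hout =>
      mem_filter.2 ⟨hV, hl.specialBlock_of_outerBlock hα hβ.1 hV hout⟩⟩
  · rintro ⟨hS, houter⟩
    exact ⟨partitionOfSpecial α 𝒱, ⟨partitionOfSpecial_isNCPartition hα hS houter,
      partitionOfSpecial_LL hα hS houter⟩, filter_specialBlock_partitionOfSpecial hα hS⟩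
end

section
/- Let n be a positive integer and let β = {W_1,…,W_q} be a partition in NC(n). The map π ↦ (π|_{W_1},…,π|_{W_q}) is a bijection from {π ∈ NCL(n) : π̂ = β} onto the product over j = 1,…,q of the sets {π_j ∈ NCL(W_j) : π̂_j = 1_{W_j}}, where 1_{W_j} is the partition of W_j into a single block. -/
open scoped Classical

/-! The blocks of `π̂` are the connected components of the "share a block" relation of `π`, so
they are saturated and `π` is the disjoint union of its restrictions to them; each restriction
is connected, and conversely gluing connected non-crossing linked partitions of the blocks of a
non-crossing partition `β` along `β` gives a non-crossing linked partition with `π̂ = β`. -/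

open Relation

def SharesBlock (π : Finset (Finset ℕ)) (a b : ℕ) : Prop := ∃ A ∈ π, a ∈ A ∧ b ∈ A

def IsSaturated (π : Finset (Finset ℕ)) (E : Finset ℕ) : Prop :=
  ∀ A ∈ π, ∀ x ∈ A, x ∈ E → A ⊆ E

lemma mem_sup_id_iff {π : Finset (Finset ℕ)} {m : ℕ} : m ∈ π.sup id ↔ ∃ A ∈ π, m ∈ A := by
  simp [Finset.sup_eq_biUnion]

lemma sup_id_eq_of_cover {π : Finset (Finset ℕ)} {F : Finset ℕ} (hsub : ∀ A ∈ π, A ⊆ F)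
    (hcov : ∀ m ∈ F, ∃ A ∈ π, m ∈ A) : π.sup id = F :=
  (Finset.sup_le hsub).antisymm fun m hm => mem_sup_id_iff.2 (hcov m hm)

lemma IsCrossing.mono {π π' : Finset (Finset ℕ)} (h : π ⊆ π') (hπ : IsCrossing π) :
    IsCrossing π' := by
  obtain ⟨A, hA, B, hB, hAB, rest⟩ := hπ
  exact ⟨A, h hA, B, h hB, hAB, rest⟩

lemma IsPartitionOfSet.eq_of_mem {F : Finset ℕ} {β : Finset (Finset ℕ)}
    (hβ : IsPartitionOfSet F β) {V W : Finset ℕ} (hV : V ∈ β) (hW : W ∈ β) {x : ℕ}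
    (hxV : x ∈ V) (hxW : x ∈ W) : V = W := by
  by_contra hVW
  simpa [hβ.2.2.2 V hV W hW hVW] using Finset.mem_inter.2 ⟨hxV, hxW⟩

section Restriction

variable {π : Finset (Finset ℕ)} {E W : Finset ℕ}

lemma IsSaturated.mem_iff_of_eqvGen (hE : IsSaturated π E) {a b : ℕ}
    (h : EqvGen (SharesBlock π) a b) : a ∈ E ↔ b ∈ E := by
  induction h with
  | rel a b hab =>
    obtain ⟨A, hA, ha, hb⟩ := hab
    exact ⟨fun haE => hE A hA a ha haE hb, fun hbE => hE A hA b hb hbE ha⟩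
  | refl => rfl
  | symm _ _ _ ih => exact ih.symm
  | trans _ _ _ _ _ ih₁ ih₂ => exact ih₁.trans ih₂

lemma IsSaturated.eqvGen_restrictL (hE : IsSaturated π E) {a b : ℕ}
    (h : EqvGen (SharesBlock π) a b) (ha : a ∈ E) :
    EqvGen (SharesBlock (restrictL π E)) a b := by
  induction h with
  | rel a b hab =>
    obtain ⟨A, hA, ha', hb⟩ := hab
    exact EqvGen.rel _ _ ⟨A, Finset.mem_filter.2 ⟨hA, hE A hA a ha' ha⟩, ha', hb⟩
  | refl => exact EqvGen.refl _
  | symm a b hab ih => exact EqvGen.symm _ _ (ih ((hE.mem_iff_of_eqvGen hab).2 ha))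
  | trans a b c hab _ ih₁ ih₂ =>
    exact EqvGen.trans _ _ _ (ih₁ ha) (ih₂ ((hE.mem_iff_of_eqvGen hab).1 ha))

lemma IsSaturated.sup_id_restrictL (hE : IsSaturated π E) (hEπ : E ⊆ π.sup id) :
    (restrictL π E).sup id = E := by
  refine sup_id_eq_of_cover (fun A hA => (Finset.mem_filter.1 hA).2) fun m hm => ?_
  obtain ⟨A, hA, hmA⟩ := mem_sup_id_iff.1 (hEπ hm)
  exact ⟨A, Finset.mem_filter.2 ⟨hA, hE A hA m hmA hm⟩, hmA⟩

lemma IsNCLOfSet.restrictL {F : Finset ℕ} (hπ : IsNCLOfSet F π) (hE : IsSaturated π E)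
    (hEF : E ⊆ F) : IsNCLOfSet E (restrictL π E) := by
  obtain ⟨⟨hne, hsub, hcov, hlink⟩, hnc⟩ := hπ
  have hres : _root_.restrictL π E ⊆ π := Finset.filter_subset _ _
  have hsup : (_root_.restrictL π E).sup id = E :=
    hE.sup_id_restrictL (sup_id_eq_of_cover hsub hcov ▸ hEF)
  refine ⟨⟨fun A hA => hne A (hres hA), fun A hA => (Finset.mem_filter.1 hA).2,
    fun m hm => mem_sup_id_iff.1 (by rwa [hsup]),
    fun A hA B hB => hlink A (hres hA) B (hres hB)⟩, fun h => hnc (h.mono hres)⟩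

end Restriction

section GeneratedPartition

variable {π β : Finset (Finset ℕ)} {W : Finset ℕ}

lemma mem_genPart :
    W ∈ genPart π ↔
      ∃ m ∈ π.sup id, (π.sup id).filter (fun x => EqvGen (SharesBlock π) m x) = W :=
  Finset.mem_image

lemma isSaturated_of_mem_genPart (hW : W ∈ genPart π) : IsSaturated π W := by
  obtain ⟨m, -, rfl⟩ := mem_genPart.1 hW
  intro A hA x hx hxW b hb
  exact Finset.mem_filter.2 ⟨mem_sup_id_iff.2 ⟨A, hA, hb⟩,
    EqvGen.trans _ _ _ (Finset.mem_filter.1 hxW).2 (EqvGen.rel _ _ ⟨A, hA, hx, hb⟩)⟩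

lemma subset_sup_id_of_mem_genPart (hW : W ∈ genPart π) : W ⊆ π.sup id := by
  obtain ⟨m, -, rfl⟩ := mem_genPart.1 hW
  exact Finset.filter_subset _ _

lemma nonempty_of_mem_genPart (hW : W ∈ genPart π) : W.Nonempty := by
  obtain ⟨m, hm, rfl⟩ := mem_genPart.1 hW
  exact ⟨m, Finset.mem_filter.2 ⟨hm, EqvGen.refl m⟩⟩

lemma eqvGen_of_mem_genPart (hW : W ∈ genPart π) {a b : ℕ} (ha : a ∈ W) (hb : b ∈ W) :
    EqvGen (SharesBlock π) a b := by
  obtain ⟨m, -, rfl⟩ := mem_genPart.1 hW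
  exact EqvGen.trans _ _ _ (EqvGen.symm _ _ (Finset.mem_filter.1 ha).2) (Finset.mem_filter.1 hb).2

lemma refines_genPart (hne : ∀ A ∈ π, A.Nonempty) : Refines π (genPart π) := by
  intro A hA
  obtain ⟨a, ha⟩ := hne A hA
  have hW : (π.sup id).filter (fun x => EqvGen (SharesBlock π) a x) ∈ genPart π :=
    mem_genPart.2 ⟨a, mem_sup_id_iff.2 ⟨A, hA, ha⟩, rfl⟩
  refine ⟨_, hW, isSaturated_of_mem_genPart hW A hA a ha ?_⟩
  exact Finset.mem_filter.2 ⟨mem_sup_id_iff.2 ⟨A, hA, ha⟩, EqvGen.refl a⟩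

lemma genPart_eq_of_components {F : Finset ℕ} (hsup : π.sup id = F)
    (hcov : ∀ m ∈ F, ∃ W ∈ β, m ∈ W) (hne : ∀ W ∈ β, ∃ m ∈ W, m ∈ F)
    (hcomp : ∀ m ∈ F, ∀ W ∈ β, m ∈ W → F.filter (fun x => EqvGen (SharesBlock π) m x) = W) :
    genPart π = β := by
  ext X
  rw [mem_genPart, hsup]
  constructor
  · rintro ⟨m, hm, rfl⟩
    obtain ⟨W, hWβ, hmW⟩ := hcov m hm
    rwa [hcomp m hm W hWβ hmW]
  · intro hX
    obtain ⟨m, hmX, hm⟩ := hne X hX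
    exact ⟨m, hm, hcomp m hm X hX hmX⟩

lemma genPart_restrictL (hW : W ∈ genPart π) : genPart (restrictL π W) = {W} := by
  have hsat := isSaturated_of_mem_genPart hW
  obtain ⟨m₀, hm₀⟩ := nonempty_of_mem_genPart hW
  refine genPart_eq_of_components (hsat.sup_id_restrictL (subset_sup_id_of_mem_genPart hW))
    (fun m hm => ⟨W, Finset.mem_singleton_self W, hm⟩)
    (fun V hV => by obtain rfl := Finset.mem_singleton.1 hV; exact ⟨m₀, hm₀, hm₀⟩)
    fun m hm V hV _ => ?_
  obtain rfl := Finset.mem_singleton.1 hV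
  refine (Finset.filter_subset _ _).antisymm fun x hx => Finset.mem_filter.2 ⟨hx, ?_⟩
  exact hsat.eqvGen_restrictL (eqvGen_of_mem_genPart hW hm hx) hm

end GeneratedPartition

lemma eq_of_restrictL_eq {ρ ρ' β : Finset (Finset ℕ)} (hρ : Refines ρ β) (hρ' : Refines ρ' β)
    (h : ∀ W ∈ β, restrictL ρ W = restrictL ρ' W) : ρ = ρ' := by
  have key : ∀ {σ σ'}, Refines σ β → (∀ W ∈ β, restrictL σ W = restrictL σ' W) → σ ⊆ σ' := by
    intro σ σ' hσ h A hA
    obtain ⟨W, hW, hAW⟩ := hσ A hA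
    have hA' : A ∈ restrictL σ W := Finset.mem_filter.2 ⟨hA, hAW⟩
    rw [h W hW] at hA'
    exact (Finset.mem_filter.1 hA').1
  exact (key hρ h).antisymm (key hρ' fun W hW => (h W hW).symm)

section Glue

def glue (β : Finset (Finset ℕ)) (f : {W : Finset ℕ // W ∈ β} → Finset (Finset ℕ)) :
    Finset (Finset ℕ) :=
  β.attach.biUnion f

variable {F : Finset ℕ} {β : Finset (Finset ℕ)} {f : {W : Finset ℕ // W ∈ β} → Finset (Finset ℕ)}

lemma mem_glue {A : Finset ℕ} : A ∈ glue β f ↔ ∃ W, A ∈ f W := by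
  simp [glue]

lemma eq_of_mem_glue_component (hβ : IsPartitionOfSet F β) (hf : ∀ W, IsLinkedPartitionOfSet W.1 (f W))
    {W W' : {W : Finset ℕ // W ∈ β}} {A : Finset ℕ}
    (hA : A ∈ f W) {x : ℕ} (hx : x ∈ A) (hxW' : x ∈ W'.1) : W = W' :=
  Subtype.ext (hβ.eq_of_mem W.2 W'.2 ((hf W).2.1 A hA hx) hxW')

lemma isSaturated_glue (hβ : IsPartitionOfSet F β) (hf : ∀ W, IsLinkedPartitionOfSet W.1 (f W))
    (W : {W : Finset ℕ // W ∈ β}) : IsSaturated (glue β f) W.1 := by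
  intro A hA x hx hxW
  obtain ⟨W', hAW'⟩ := mem_glue.1 hA
  obtain rfl := eq_of_mem_glue_component hβ hf hAW' hx hxW
  exact (hf W').2.1 A hAW'

lemma restrictL_glue (hβ : IsPartitionOfSet F β) (hf : ∀ W, IsLinkedPartitionOfSet W.1 (f W))
    (W : {W : Finset ℕ // W ∈ β}) : restrictL (glue β f) W.1 = f W := by
  ext A
  refine ⟨fun hA => ?_, fun hA => Finset.mem_filter.2 ⟨mem_glue.2 ⟨W, hA⟩, (hf W).2.1 A hA⟩⟩
  obtain ⟨hAglue, hAW⟩ := Finset.mem_filter.1 hA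
  obtain ⟨W', hAW'⟩ := mem_glue.1 hAglue
  obtain ⟨x, hx⟩ := (hf W').1 A hAW'
  rwa [← eq_of_mem_glue_component hβ hf hAW' hx (hAW hx)]

lemma isLinkedPartitionOfSet_glue (hβ : IsPartitionOfSet F β) (hf : ∀ W, IsLinkedPartitionOfSet W.1 (f W)) : IsLinkedPartitionOfSet F (glue β f) := by
  have hsub : ∀ W A, A ∈ f W → A ⊆ F := fun W A hA => ((hf W).2.1 A hA).trans (hβ.2.1 W.1 W.2)
  refine ⟨fun A hA => ?_, fun A hA => ?_, fun m hm => ?_, fun A hA B hB hAB => ?_⟩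
  · obtain ⟨W, hAW⟩ := mem_glue.1 hA
    exact (hf W).1 A hAW
  · obtain ⟨W, hAW⟩ := mem_glue.1 hA
    exact hsub W A hAW
  · obtain ⟨W, hW, hmW⟩ := hβ.2.2.1 m hm
    obtain ⟨A, hA, hmA⟩ := (hf ⟨W, hW⟩).2.2.1 m hmW
    exact ⟨A, mem_glue.2 ⟨_, hA⟩, hmA⟩
  · obtain ⟨W, hAW⟩ := mem_glue.1 hA
    obtain ⟨W', hBW'⟩ := mem_glue.1 hB
    by_cases hWW' : W = W'
    · subst hWW'
      exact (hf W).2.2.2 A hAW B hBW' hAB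
    · refine Or.inl (Finset.eq_empty_of_forall_notMem fun x hx => hWW' ?_)
      obtain ⟨hxA, hxB⟩ := Finset.mem_inter.1 hx
      exact eq_of_mem_glue_component hβ hf hAW hxA ((hf W').2.1 B hBW' hxB)

lemma not_isCrossing_glue (hf : ∀ W, IsLinkedPartitionOfSet W.1 (f W)) (hβnc : ¬ IsCrossing β) (hfnc : ∀ W, ¬ IsCrossing (f W)) :
    ¬ IsCrossing (glue β f) := by
  rintro ⟨A, hA, B, hB, hAB, a, ha, b, hb, c, hc, d, hd, hab, hbc, hcd⟩
  obtain ⟨W, hAW⟩ := mem_glue.1 hA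
  obtain ⟨W', hBW'⟩ := mem_glue.1 hB
  have hAsub := (hf W).2.1 A hAW
  have hBsub := (hf W').2.1 B hBW'
  by_cases hWW' : W = W'
  · subst hWW'
    exact hfnc W ⟨A, hAW, B, hBW', hAB, a, ha, b, hb, c, hc, d, hd, hab, hbc, hcd⟩
  · exact hβnc ⟨W.1, W.2, W'.1, W'.2, fun h => hWW' (Subtype.ext h), a, hAsub ha, b, hBsub hb,
      c, hAsub hc, d, hBsub hd, hab, hbc, hcd⟩

lemma genPart_glue (hβ : IsPartitionOfSet F β) (hf : ∀ W, IsLinkedPartitionOfSet W.1 (f W))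
    (hconn : ∀ W, genPart (f W) = {W.1}) : genPart (glue β f) = β := by
  obtain ⟨-, hsub, hcov, -⟩ := isLinkedPartitionOfSet_glue hβ hf
  refine genPart_eq_of_components (sup_id_eq_of_cover hsub hcov) hβ.2.2.1
    (fun W hW => (hβ.1 W hW).imp fun m hm => ⟨hm, hβ.2.1 W hW hm⟩) fun m _ W hW hmW => ?_
  refine Finset.Subset.antisymm (fun x hx => ?_) fun x hxW => ?_
  · exact ((isSaturated_glue hβ hf ⟨W, hW⟩).mem_iff_of_eqvGen (Finset.mem_filter.1 hx).2).1 hmW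
  · refine Finset.mem_filter.2 ⟨hβ.2.1 W hW hxW, ?_⟩
    have hWgen : W ∈ genPart (f ⟨W, hW⟩) := (hconn ⟨W, hW⟩).symm ▸ Finset.mem_singleton_self W
    refine EqvGen.mono ?_ _ _ (eqvGen_of_mem_genPart hWgen hmW hxW)
    rintro a b ⟨A, hA, hab⟩
    exact ⟨A, mem_glue.2 ⟨_, hA⟩, hab⟩

end Glue

theorem stmt9_general (n : ℕ) (β : Finset (Finset ℕ)) (hβ : IsNCPartition n β) :
    Set.BijOn (fun π => fun W : {W : Finset ℕ // W ∈ β} => restrictL π W.1)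
      {π : Finset (Finset ℕ) | IsNCL n π ∧ genPart π = β}
      {f : {W : Finset ℕ // W ∈ β} → Finset (Finset ℕ) |
        ∀ W, IsNCLOfSet W.1 (f W) ∧ genPart (f W) = {W.1}} := by
  obtain ⟨hβpart, hβnc⟩ := hβ
  refine ⟨fun π ⟨hπ, hgen⟩ W => ?_, fun ρ ⟨hρ, hρgen⟩ ρ' ⟨hρ', hρ'gen⟩ h => ?_, fun f hf => ?_⟩
  · have hW : W.1 ∈ genPart π := hgen ▸ W.2
    exact ⟨hπ.restrictL (isSaturated_of_mem_genPart hW) (hβpart.2.1 W.1 W.2),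
      genPart_restrictL hW⟩
  · exact eq_of_restrictL_eq (hρgen ▸ refines_genPart hρ.1.1) (hρ'gen ▸ refines_genPart hρ'.1.1)
      fun W hW => congrFun h ⟨W, hW⟩
  · have hlink W := (hf W).1.1
    refine ⟨glue β f, ⟨⟨isLinkedPartitionOfSet_glue hβpart hlink,
      not_isCrossing_glue hlink hβnc fun W => (hf W).1.2⟩,
      genPart_glue hβpart hlink fun W => (hf W).2⟩, funext (restrictL_glue hβpart hlink)⟩

/-- Let `n` be a positive integer and `β = {W₁,…,W_q} ∈ NC(n)`. The map
`π ↦ (π|_{W₁},…,π|_{W_q})` is a bijection from `{π ∈ NCL(n) : π̂ = β}` onto the product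
over the blocks `W` of `β` of the sets `{π_W ∈ NCL(W) : π̂_W = 1_W}`. -/
theorem stmt9 (n : ℕ) (hn : 0 < n) (β : Finset (Finset ℕ)) (hβ : IsNCPartition n β) :
    Set.BijOn (fun π => fun W : {W : Finset ℕ // W ∈ β} => restrictL π W.1)
      {π : Finset (Finset ℕ) | IsNCL n π ∧ genPart π = β}
      {f : {W : Finset ℕ // W ∈ β} → Finset (Finset ℕ) |
        ∀ W, IsNCLOfSet W.1 (f W) ∧ genPart (f W) = {W.1}} :=
  stmt9_general n β hβ
end
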